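/- For Lebesgue-almost every s ∈ (0,1), the forward orbit {Rⁿ(s) : n ≥ 0} is dense in (0,1). -/

import Mathlib

/-!
Write `T` for the jump transformation: `R` on `(0, 1/2)` and `R²` on `(1/2, 1)`. Its inverse
branches `y ↦ 1 / (2 (y + k))` and `y ↦ 1 - 1 / (2 (y + k))`, `k ≥ 1`, are Möbius maps of
determinant `±2`, and every irrational point of `(0,1)` lies in the image of `(0,1)` under a
composition `φ` of `n` of them, for every `n`. Such a `φ = (p y + q) / (r y + s)` has nonnegative
coefficients, `r ≤ 2 s`, `|det| = 2ⁿ ≤ s`, hence bounded distortion on `[0,1]`: its derivative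
lies between `2ⁿ / (9 s²)` and `2ⁿ / s²`. Points of `φ [a, b]` have `R`-orbits meeting `[a, b]`,
so the irrationals whose orbit avoids `[a, b]` miss a fixed proportion of balls of radius
`2ⁿ / s² ≤ 2⁻ⁿ` around each of their points. By Lebesgue's density theorem they form a null set,
and taking all rational `[a, b]` gives density of almost every orbit.
-/

/-- The renormalization map `R : (0,1) → [0,1)`: `R(x) = 1 − x` if `x ≥ 1/2`, and
`R(x) = 1/(2x) − ⌊1/(2x)⌋` if `x < 1/2`. -/
noncomputable def Rmap (x : ℝ) : ℝ :=
  if x < 1/2 then 1 / (2 * x) - ⌊1 / (2 * x)⌋ else 1 - x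

/-- The Gauss map `γ(x) = 1/x − ⌊1/x⌋`. -/
noncomputable def gaussMap (x : ℝ) : ℝ := 1 / x - ⌊1 / x⌋

open MeasureTheory

open Set Filter Metric Topology
open scoped ENNReal

noncomputable def mobius (M : Matrix (Fin 2) (Fin 2) ℝ) (y : ℝ) : ℝ :=
  (M 0 0 * y + M 0 1) / (M 1 0 * y + M 1 1)

theorem mobius_mul (M N : Matrix (Fin 2) (Fin 2) ℝ) {y : ℝ} (hy : N 1 0 * y + N 1 1 ≠ 0) :
    mobius (M * N) y = mobius M (mobius N y) := by
  simp only [mobius, Matrix.mul_apply, Fin.sum_univ_two]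
  rw [← div_div_div_cancel_right₀ hy]
  congr 1 <;> field_simp <;> ring

theorem mobius_sub_mobius (M : Matrix (Fin 2) (Fin 2) ℝ) {y t : ℝ}
    (hy : M 1 0 * y + M 1 1 ≠ 0) (ht : M 1 0 * t + M 1 1 ≠ 0) :
    mobius M y - mobius M t =
      M.det * (y - t) / ((M 1 0 * y + M 1 1) * (M 1 0 * t + M 1 1)) := by
  rw [Matrix.det_fin_two, mobius, mobius, div_sub_div _ _ hy ht]
  ring

section Distortion

variable {M : Matrix (Fin 2) (Fin 2) ℝ} (hc : 0 ≤ M 1 0) (hd : 0 < M 1 1)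
include hc hd

theorem mobius_denom_pos {y : ℝ} (hy : 0 ≤ y) : 0 < M 1 0 * y + M 1 1 := by
  positivity

theorem continuousOn_mobius : ContinuousOn (mobius M) (Ici 0) := by
  refine ContinuousOn.div (by fun_prop) (by fun_prop) fun y hy => ?_
  exact (mobius_denom_pos hc hd hy).ne'

theorem abs_mobius_sub_le {y t : ℝ} (hy : 0 ≤ y) (ht : 0 ≤ t) :
    |mobius M y - mobius M t| ≤ |M.det| / M 1 1 ^ 2 * |y - t| := by
  have hy' := mobius_denom_pos hc hd hy
  have ht' := mobius_denom_pos hc hd ht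
  rw [mobius_sub_mobius M hy'.ne' ht'.ne', abs_div, abs_mul, abs_of_pos (mul_pos hy' ht'),
    div_mul_eq_mul_div]
  gcongr
  rw [sq]
  exact mul_le_mul (le_add_of_nonneg_left (mul_nonneg hc hy))
    (le_add_of_nonneg_left (mul_nonneg hc ht)) hd.le hy'.le

theorem le_abs_mobius_sub (hcd : M 1 0 ≤ 2 * M 1 1) {y t : ℝ} (hy : y ∈ Icc 0 1)
    (ht : t ∈ Icc 0 1) :
    |M.det| / (9 * M 1 1 ^ 2) * |y - t| ≤ |mobius M y - mobius M t| := by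
  have hy' := mobius_denom_pos hc hd hy.1
  have ht' := mobius_denom_pos hc hd ht.1
  rw [mobius_sub_mobius M hy'.ne' ht'.ne', abs_div, abs_mul, abs_of_pos (mul_pos hy' ht'),
    div_mul_eq_mul_div]
  refine div_le_div_of_nonneg_left (by positivity) (mul_pos hy' ht') ?_
  have hcy : M 1 0 * y ≤ 2 * M 1 1 := by nlinarith [hy.2]
  have hct : M 1 0 * t ≤ 2 * M 1 1 := by nlinarith [ht.2]
  nlinarith [mul_le_mul (by linarith : M 1 0 * y + M 1 1 ≤ 3 * M 1 1)
    (by linarith : M 1 0 * t + M 1 1 ≤ 3 * M 1 1) ht'.le (by linarith)]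

-- With `ρ = |det M| / (M 1 1)²`, the image has length at least `(b - a) ρ / 9` and the ball
-- has measure `2 ρ`.
theorem exists_subset_mobius_image_Icc (hcd : M 1 0 ≤ 2 * M 1 1) {a b t : ℝ} (ha : 0 ≤ a)
    (hab : a < b) (hb : b ≤ 1) (ht : t ∈ Icc 0 1) :
    ∃ D, MeasurableSet D ∧ D ⊆ mobius M '' Icc a b ∧
      D ⊆ closedBall (mobius M t) (|M.det| / M 1 1 ^ 2) ∧
      ENNReal.ofReal ((b - a) / 18) * volume (closedBall (mobius M t) (|M.det| / M 1 1 ^ 2))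
        ≤ volume D := by
  have hsub : uIcc (mobius M a) (mobius M b) ⊆ mobius M '' Icc a b := by
    rw [← uIcc_of_le hab.le]
    exact intermediate_value_uIcc ((continuousOn_mobius hc hd).mono
      fun y hy => ha.trans (uIcc_of_le hab.le ▸ hy).1)
  refine ⟨_, measurableSet_uIcc, hsub, ?_, ?_⟩
  · rintro _ hz
    obtain ⟨y, hy, rfl⟩ := hsub hz
    rw [mem_closedBall, Real.dist_eq]
    calc |mobius M y - mobius M t| ≤ |M.det| / M 1 1 ^ 2 * |y - t| :=
          abs_mobius_sub_le hc hd (ha.trans hy.1) ht.1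
      _ ≤ |M.det| / M 1 1 ^ 2 * 1 := by
          gcongr
          exact abs_sub_le_iff.2 ⟨by linarith [hy.2, ht.1], by linarith [hy.1, ht.2]⟩
      _ = |M.det| / M 1 1 ^ 2 := mul_one _
  · rw [Real.volume_closedBall, Real.volume_interval, ← ENNReal.ofReal_mul (by linarith)]
    refine ENNReal.ofReal_le_ofReal (le_trans (le_of_eq ?_)
      (le_abs_mobius_sub hc hd hcd ⟨ha.trans hab.le, hb⟩ ⟨ha, hab.le.trans hb⟩))
    rw [abs_of_pos (sub_pos.2 hab)]
    ring

end Distortion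

def leftBranch (k : ℤ) : Matrix (Fin 2) (Fin 2) ℝ := !![0, 1; 2, 2 * k]

def rightBranch (k : ℤ) : Matrix (Fin 2) (Fin 2) ℝ := !![2, 2 * k - 1; 2, 2 * k]

theorem mobius_leftBranch (k : ℤ) (y : ℝ) : mobius (leftBranch k) y = 1 / (2 * (y + k)) := by
  simp only [mobius, leftBranch, Matrix.of_apply, Matrix.cons_val', Matrix.cons_val_zero,
    Matrix.cons_val_one, Matrix.empty_val', Matrix.cons_val_fin_one]
  ring

theorem mobius_rightBranch {k : ℤ} (hk : 1 ≤ k) {y : ℝ} (hy : 0 ≤ y) :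
    mobius (rightBranch k) y = 1 - mobius (leftBranch k) y := by
  have hyk : y + k ≠ 0 := by linarith [(by exact_mod_cast hk : (1 : ℝ) ≤ k)]
  rw [mobius_leftBranch]
  simp only [mobius, rightBranch, Matrix.of_apply, Matrix.cons_val', Matrix.cons_val_zero,
    Matrix.cons_val_one, Matrix.empty_val', Matrix.cons_val_fin_one]
  field_simp
  ring

theorem mobius_leftBranch_mem_Ioo {k : ℤ} (hk : 1 ≤ k) {y : ℝ} (hy : 0 < y) :
    mobius (leftBranch k) y ∈ Ioo 0 (1 / 2) := by
  have hk' : (1 : ℝ) ≤ k := by exact_mod_cast hk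
  rw [mobius_leftBranch]
  constructor
  · positivity
  · rw [div_lt_div_iff₀ (by positivity) two_pos]
    linarith

theorem Rmap_mobius_leftBranch {k : ℤ} (hk : 1 ≤ k) {y : ℝ} (hy : y ∈ Ioo 0 1) :
    Rmap (mobius (leftBranch k) y) = y := by
  have hyk : y + k ≠ 0 := by linarith [hy.1, (by exact_mod_cast hk : (1 : ℝ) ≤ k)]
  have hinv : 1 / (2 * mobius (leftBranch k) y) = y + k := by
    rw [mobius_leftBranch]
    field_simp
  rw [Rmap, if_pos (mobius_leftBranch_mem_Ioo hk hy.1).2, hinv, Int.floor_add_intCast,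
    Int.floor_eq_zero_iff.2 ⟨hy.1.le, hy.2⟩]
  simp

theorem Rmap_mobius_rightBranch {k : ℤ} (hk : 1 ≤ k) {y : ℝ} (hy : 0 < y) :
    Rmap (mobius (rightBranch k) y) = mobius (leftBranch k) y := by
  have hleft := mobius_leftBranch_mem_Ioo hk hy
  rw [mobius_rightBranch hk hy.le, Rmap, if_neg (by linarith [hleft.2])]
  ring

def IsBranch (B : Matrix (Fin 2) (Fin 2) ℝ) : Prop :=
  ∃ k : ℤ, 1 ≤ k ∧ (B = leftBranch k ∨ B = rightBranch k)

namespace IsBranch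

variable {B : Matrix (Fin 2) (Fin 2) ℝ} (hB : IsBranch B)
include hB

theorem nonneg (i j : Fin 2) : 0 ≤ B i j := by
  obtain ⟨k, hk, rfl | rfl⟩ := hB <;> have : (1 : ℝ) ≤ k := by exact_mod_cast hk
  all_goals fin_cases i <;> fin_cases j <;> simp [leftBranch, rightBranch] <;> linarith

theorem col_zero_le_two_mul (i : Fin 2) : B i 0 ≤ 2 * B i 1 := by
  obtain ⟨k, hk, rfl | rfl⟩ := hB <;> have : (1 : ℝ) ≤ k := by exact_mod_cast hk
  all_goals fin_cases i <;> simp [leftBranch, rightBranch] <;> linarith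

theorem two_le : 2 ≤ B 1 1 := by
  obtain ⟨k, hk, rfl | rfl⟩ := hB <;> have : (1 : ℝ) ≤ k := by exact_mod_cast hk
  all_goals simp [leftBranch, rightBranch]; linarith

theorem denom_pos {y : ℝ} (hy : 0 ≤ y) : 0 < B 1 0 * y + B 1 1 :=
  mobius_denom_pos (hB.nonneg 1 0) (zero_lt_two.trans_le hB.two_le) hy

theorem abs_det : |B.det| = 2 := by
  obtain ⟨k, hk, rfl | rfl⟩ := hB <;> simp only [leftBranch, rightBranch, Matrix.det_fin_two_of]
  · norm_num
  · ring_nf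
    norm_num

theorem mobius_mem_Ioo {y : ℝ} (hy : y ∈ Ioo 0 1) : mobius B y ∈ Ioo 0 1 := by
  obtain ⟨k, hk, rfl | rfl⟩ := hB <;> have h := mobius_leftBranch_mem_Ioo hk hy.1
  · exact ⟨h.1, h.2.trans (by norm_num)⟩
  · rw [mobius_rightBranch hk hy.1.le]
    exact ⟨by linarith [h.2], by linarith [h.1]⟩

theorem exists_iterate_Rmap {y : ℝ} (hy : y ∈ Ioo 0 1) : ∃ m, Rmap^[m] (mobius B y) = y := by
  obtain ⟨k, hk, rfl | rfl⟩ := hB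
  · exact ⟨1, Rmap_mobius_leftBranch hk hy⟩
  · refine ⟨2, ?_⟩
    rw [Function.iterate_succ_apply, Function.iterate_one, Rmap_mobius_rightBranch hk hy.1,
      Rmap_mobius_leftBranch hk hy]

end IsBranch

theorem exists_leftBranch_of_irrational {y : ℝ} (hy : Irrational y) (hy0 : 0 < y)
    (hy1 : y < 1 / 2) :
    ∃ k : ℤ, 1 ≤ k ∧ ∃ y', Irrational y' ∧ y' ∈ Ioo 0 1 ∧ mobius (leftBranch k) y' = y := by
  have hfract : Irrational (Int.fract (1 / (2 * y))) := by
    have h2y : Irrational (2 * y) := by simpa using hy.natCast_mul (m := 2) two_ne_zero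
    rw [Int.fract, one_div]
    exact h2y.inv.sub_intCast _
  refine ⟨⌊1 / (2 * y)⌋, Int.le_floor.2 ?_, _, hfract,
    ⟨lt_of_le_of_ne (Int.fract_nonneg _) hfract.ne_zero.symm, Int.fract_lt_one _⟩, ?_⟩
  · rw [Int.cast_one, le_div_iff₀ (by positivity)]
    linarith
  · rw [mobius_leftBranch, Int.fract_add_floor]
    field_simp

theorem exists_isBranch_of_irrational {y : ℝ} (hy : Irrational y) (hy01 : y ∈ Ioo 0 1) :
    ∃ B, IsBranch B ∧ ∃ y', Irrational y' ∧ y' ∈ Ioo 0 1 ∧ mobius B y' = y := by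
  rcases lt_trichotomy y (1 / 2) with hlt | heq | hgt
  · obtain ⟨k, hk, y', hy', hy'01, rfl⟩ := exists_leftBranch_of_irrational hy hy01.1 hlt
    exact ⟨_, ⟨k, hk, Or.inl rfl⟩, y', hy', hy'01, rfl⟩
  · exact absurd heq (by simpa using hy.ne_rat (1 / 2))
  · obtain ⟨k, hk, y', hy', hy'01, hy'y⟩ :=
      exists_leftBranch_of_irrational (by simpa using hy.natCast_sub 1) (by linarith [hy01.2])
        (by linarith)
    refine ⟨_, ⟨k, hk, Or.inr rfl⟩, y', hy', hy'01, ?_⟩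
    rw [mobius_rightBranch hk hy'01.1.le, hy'y]
    ring

inductive IsBranchProduct : ℕ → Matrix (Fin 2) (Fin 2) ℝ → Prop
  | one : IsBranchProduct 0 1
  | mul {n : ℕ} {M B : Matrix (Fin 2) (Fin 2) ℝ} :
      IsBranchProduct n M → IsBranch B → IsBranchProduct (n + 1) (M * B)

namespace IsBranchProduct

variable {n : ℕ} {M : Matrix (Fin 2) (Fin 2) ℝ}

theorem nonneg (hM : IsBranchProduct n M) (i j : Fin 2) : 0 ≤ M i j := by
  induction hM generalizing i j with
  | one => fin_cases i <;> fin_cases j <;> simp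
  | mul _ hB ih =>
    rw [Matrix.mul_apply, Fin.sum_univ_two]
    exact add_nonneg (mul_nonneg (ih i 0) (hB.nonneg 0 j)) (mul_nonneg (ih i 1) (hB.nonneg 1 j))

theorem apply_one_zero_le_two_mul (hM : IsBranchProduct n M) : M 1 0 ≤ 2 * M 1 1 := by
  cases hM with
  | one => simp
  | mul hM hB =>
    simp only [Matrix.mul_apply, Fin.sum_univ_two]
    nlinarith [mul_le_mul_of_nonneg_left (hB.col_zero_le_two_mul 0) (hM.nonneg 1 0),
      mul_le_mul_of_nonneg_left (hB.col_zero_le_two_mul 1) (hM.nonneg 1 1)]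

theorem two_pow_le (hM : IsBranchProduct n M) : 2 ^ n ≤ M 1 1 := by
  induction hM with
  | one => simp
  | @mul n M B hM hB ih =>
    simp only [Matrix.mul_apply, Fin.sum_univ_two, pow_succ]
    nlinarith [mul_nonneg (hM.nonneg 1 0) (hB.nonneg 0 1),
      mul_le_mul_of_nonneg_left hB.two_le (hM.nonneg 1 1)]

theorem abs_det (hM : IsBranchProduct n M) : |M.det| = 2 ^ n := by
  induction hM with
  | one => simp
  | mul _ hB ih => rw [Matrix.det_mul, abs_mul, ih, hB.abs_det, pow_succ]

theorem exists_iterate_Rmap (hM : IsBranchProduct n M) {y : ℝ} (hy : y ∈ Ioo 0 1) :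
    ∃ m, Rmap^[m] (mobius M y) = y := by
  induction hM generalizing y with
  | one => exact ⟨0, by simp [mobius]⟩
  | mul _ hB ih =>
    obtain ⟨m', hm'⟩ := hB.exists_iterate_Rmap hy
    obtain ⟨m, hm⟩ := ih (hB.mobius_mem_Ioo hy)
    refine ⟨m' + m, ?_⟩
    rw [mobius_mul _ _ (hB.denom_pos hy.1.le).ne', Function.iterate_add_apply, hm, hm']

end IsBranchProduct

theorem exists_isBranchProduct_of_irrational {x : ℝ} (hx : Irrational x) (hx01 : x ∈ Ioo 0 1)
    (n : ℕ) : ∃ M y, IsBranchProduct n M ∧ Irrational y ∧ y ∈ Ioo 0 1 ∧ mobius M y = x := by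
  induction n with
  | zero => exact ⟨1, x, .one, hx, hx01, by simp [mobius]⟩
  | succ n ih =>
    obtain ⟨M, y, hM, hy, hy01, rfl⟩ := ih
    obtain ⟨B, hB, y', hy', hy'01, rfl⟩ := exists_isBranch_of_irrational hy hy01
    exact ⟨M * B, y', hM.mul hB, hy', hy'01, mobius_mul _ _ (hB.denom_pos hy'01.1.le).ne'⟩

theorem tendsto_abs_det_div_sq_nhdsGT {M : ℕ → Matrix (Fin 2) (Fin 2) ℝ}
    (hM : ∀ n, IsBranchProduct n (M n)) :
    Tendsto (fun n => |(M n).det| / M n 1 1 ^ 2) atTop (𝓝[>] 0) := by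
  have hpos : ∀ n, (0 : ℝ) < 2 ^ n := fun n => by positivity
  have hle : ∀ n, |(M n).det| / M n 1 1 ^ 2 ≤ 2⁻¹ ^ n := fun n => by
    rw [(hM n).abs_det, inv_pow, ← div_self_mul_self' ((2 : ℝ) ^ n), ← sq]
    gcongr
    exact (hM n).two_pow_le
  refine tendsto_nhdsWithin_iff.2 ⟨squeeze_zero (fun n => by positivity) hle
    (tendsto_pow_atTop_nhds_zero_of_lt_one (by norm_num) (by norm_num)), .of_forall fun n => ?_⟩
  rw [mem_Ioi, (hM n).abs_det]
  exact div_pos (hpos n) (pow_pos ((hpos n).trans_le (hM n).two_pow_le) 2)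

theorem not_tendsto_measure_inter_div_of_gaps {α : Type*} [PseudoMetricSpace α]
    [MeasurableSpace α] {μ : Measure α} {B : Set α} {x : α} {c : ℝ≥0∞} (hc : c ≠ 0)
    {ρ : ℕ → ℝ} (hρ : Tendsto ρ atTop (𝓝[>] 0)) (hfin : ∀ n, μ (closedBall x (ρ n)) ≠ ∞)
    (hgap : ∀ n, ∃ D, MeasurableSet D ∧ D ⊆ closedBall x (ρ n) ∧ Disjoint D B ∧
      c * μ (closedBall x (ρ n)) ≤ μ D) :
    ¬ Tendsto (fun r => μ (B ∩ closedBall x r) / μ (closedBall x r)) (𝓝[>] 0) (𝓝 1) := by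
  intro hdens
  have hle : ∀ n, μ (B ∩ closedBall x (ρ n)) / μ (closedBall x (ρ n)) ≤ 1 - c := fun n => by
    obtain ⟨D, hDm, hDball, hDB, hDμ⟩ := hgap n
    have hsplit : μ D + μ (B ∩ closedBall x (ρ n)) ≤ μ (closedBall x (ρ n)) :=
      calc μ D + μ (B ∩ closedBall x (ρ n))
          ≤ μ (closedBall x (ρ n) ∩ D) + μ (closedBall x (ρ n) \ D) := by
            rw [inter_eq_right.2 hDball]
            exact add_le_add le_rfl
              (measure_mono fun z hz => ⟨hz.2, hDB.notMem_of_mem_right hz.1⟩)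
        _ = μ (closedBall x (ρ n)) := measure_inter_add_sdiff _ hDm
    refine ENNReal.div_le_of_le_mul ?_
    rw [ENNReal.sub_mul fun _ _ => hfin n, one_mul]
    exact ENNReal.le_sub_of_add_le_left (ne_top_of_le_ne_top (hfin n) (hDμ.trans
      (le_self_add.trans hsplit))) ((add_le_add hDμ le_rfl).trans hsplit)
  have h1 : (1 : ℝ≥0∞) ≤ 1 - c := le_of_tendsto' (hdens.comp hρ) hle
  exact (ENNReal.sub_lt_self ENNReal.one_ne_top one_ne_zero hc).not_ge h1

theorem ae_exists_iterate_Rmap_mem_Icc {a b : ℝ} (ha : 0 < a) (hab : a < b) (hb : b < 1) :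
    ∀ᵐ s ∂(volume : Measure ℝ), Irrational s → s ∈ Ioo 0 1 → ∃ m, Rmap^[m] s ∈ Icc a b := by
  rw [ae_iff]
  simp only [Classical.not_imp, not_exists]
  by_contra hB
  obtain ⟨x, ⟨hx, hx01, -⟩, hdens⟩ :=
    Measure.exists_mem_of_measure_ne_zero_of_ae hB (Besicovitch.ae_tendsto_measure_inter_div _ _)
  choose M y hM _ hy hMy using exists_isBranchProduct_of_irrational hx hx01
  refine not_tendsto_measure_inter_div_of_gaps (c := ENNReal.ofReal ((b - a) / 18))
    (ENNReal.ofReal_pos.2 (by linarith)).ne' (tendsto_abs_det_div_sq_nhdsGT hM)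
    (fun _ => measure_closedBall_lt_top.ne) (fun n => ?_) hdens
  obtain ⟨D, hDm, hDimg, hDball, hDμ⟩ := exists_subset_mobius_image_Icc ((hM n).nonneg 1 0)
    ((pow_pos two_pos n).trans_le (hM n).two_pow_le) (hM n).apply_one_zero_le_two_mul
    ha.le hab hb.le (Ioo_subset_Icc_self (hy n))
  rw [hMy] at hDball hDμ
  refine ⟨D, hDm, hDball, disjoint_left.2 fun z hzD hzB => ?_, hDμ⟩
  obtain ⟨w, hw, rfl⟩ := hDimg hzD
  obtain ⟨m, hm⟩ := (hM n).exists_iterate_Rmap ⟨ha.trans_le hw.1, hw.2.trans_lt hb⟩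
  exact hzB.2.2 m (by rwa [hm])

theorem Ioo_subset_closure_of_forall_rat {S : Set ℝ} {u v : ℝ}
    (h : ∀ a b : ℚ, u < a → (a : ℝ) < b → (b : ℝ) < v → ∃ z ∈ S, z ∈ Icc (a : ℝ) b) :
    Ioo u v ⊆ closure S := by
  intro t ⟨hut, htv⟩
  refine Metric.mem_closure_iff.2 fun ε hε => ?_
  obtain ⟨a, hla, hat⟩ := exists_rat_btwn (max_lt (sub_lt_self t hε) hut)
  obtain ⟨b, htb, hbu⟩ := exists_rat_btwn (lt_min (lt_add_of_pos_right t hε) htv)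
  obtain ⟨z, hzS, hza, hzb⟩ := h a b ((le_max_right _ _).trans_lt hla) (hat.trans htb)
    (hbu.trans_le (min_le_right _ _))
  refine ⟨z, hzS, abs_sub_lt_iff.2 ⟨?_, ?_⟩⟩
  · linarith [le_max_left (t - ε) u]
  · linarith [min_le_left (t + ε) v]

/-- For Lebesgue-almost every `s ∈ (0,1)`, the forward orbit
`{Rⁿ(s) : n ≥ 0}` is dense in `(0,1)`. -/
theorem R_orbit_dense_ae :
    ∀ᵐ s ∂(volume : Measure ℝ), s ∈ Set.Ioo (0 : ℝ) 1 →
      Set.Ioo (0 : ℝ) 1 ⊆ closure {x : ℝ | ∃ n : ℕ, Rmap^[n] s = x} := by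
  have hhit : ∀ᵐ s ∂(volume : Measure ℝ), ∀ a b : ℚ, (0 : ℝ) < a → (a : ℝ) < b → (b : ℝ) < 1 →
      Irrational s → s ∈ Ioo 0 1 → ∃ m, Rmap^[m] s ∈ Icc (a : ℝ) b := by
    simp only [ae_all_iff, eventually_imp_distrib_left]
    exact fun a b ha hab hb => ae_exists_iterate_Rmap_mem_Icc ha hab hb
  filter_upwards [hhit, (countable_range ((↑) : ℚ → ℝ)).ae_notMem volume] with s hs hirr hs01
  refine Ioo_subset_closure_of_forall_rat fun a b ha hab hb => ?_
  obtain ⟨m, hm⟩ := hs a b ha hab hb hirr hs01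
  exact ⟨_, ⟨m, rfl⟩, hm⟩
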